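/- arXiv:2306.04924 — 2 statements merged into one kernel-verified Lean document; each statement's English description precedes it below -/
import Mathlib

section
/- Sufficiency of random codebooks with simple selecting decoders (Lemma 2): Let U ∈ ℝ^t be shared randomness with distribution P_U, let f : S^{d−1} × ℝ^t → [M] be a random encoder satisfying ε-LDP, and let g : [M] × ℝ^t → ℝ^d be a deterministic decoder such that the composition is unbiased, i.e. E_{P_U}[∑_{m=1}^M g(m, U) Q_f(m | v, U)] = v for all v ∈ S^{d−1}. Then there exist a random codebook Ũ^M = (Ũ_1,…,Ũ_M) ∈ (ℝ^d)^M and a random encoder f_0 : S^{d−1} × (ℝ^d)^M → [M] such that f_0 satisfies ε-LDP, the scheme (f_0, g^+, P_{Ũ^M}) with the simple selecting decoder g^+(m, Ũ^M) = Ũ_m is unbiased, and E_{P_U}[∑_{m=1}^M ‖g(m,U) − v‖² Q_f(m | v, U)] = E_{P_{Ũ^M}}[∑_{m=1}^M ‖Ũ_m − v‖² Q_{f_0}(m | v, Ũ^M)] for every v ∈ S^{d−1}. -/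
/-!
Let `Ũ^M := (g(m, U))_m` be the codebook induced by the shared randomness and let the new encoder
be the old one averaged over the conditional law of `U` given the codebook,
`Q₀(m | v, c) = E[Q(m | v, U) | Ũ^M = c]`. Averaging preserves being a probability vector and the
`ε`-LDP inequalities, and by the tower property
`E[∑ₘ Q(m | v, U) φ(m, Ũ^M)] = E[∑ₘ Q₀(m | v, Ũ^M) φ(m, Ũ^M)]` for every `φ`;
`φ(m, c) = c_m` gives unbiasedness and `φ(m, c) = ‖c_m - v‖²` the equality of the errors.
-/

open MeasureTheory ProbabilityTheory
open scoped ENNReal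

section CondDistribId

variable {Ω β : Type*} [MeasurableSpace Ω] [StandardBorelSpace Ω] [Nonempty Ω]
  [MeasurableSpace β] {P : Measure Ω} [IsFiniteMeasure P] {G : Ω → β}

lemma lintegral_lintegral_condDistrib_id (hG : Measurable G) {F : β × Ω → ℝ≥0∞}
    (hF : Measurable F) :
    ∫⁻ c, ∫⁻ u, F (c, u) ∂condDistrib id G P c ∂P.map G = ∫⁻ u, F (G u, u) ∂P := by
  rw [← Measure.lintegral_compProd hF, compProd_map_condDistrib aemeasurable_id,
    lintegral_map hF (hG.prodMk measurable_id)]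
  rfl

lemma integral_integral_condDistrib_id {E : Type*} [NormedAddCommGroup E] [NormedSpace ℝ E]
    (hG : Measurable G) {F : β × Ω → E} (hF : StronglyMeasurable F)
    (hFi : Integrable (fun u => F (G u, u)) P) :
    ∫ c, ∫ u, F (c, u) ∂condDistrib id G P c ∂P.map G = ∫ u, F (G u, u) ∂P := by
  have hφ : AEMeasurable (fun u => (G u, id u)) P := (hG.prodMk measurable_id).aemeasurable
  rw [← Measure.integral_compProd, compProd_map_condDistrib aemeasurable_id,
    integral_map hφ hF.aestronglyMeasurable]
  · rfl
  rwa [compProd_map_condDistrib aemeasurable_id,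
    integrable_map_measure hF.aestronglyMeasurable hφ]

-- Unlike the integrable case, `F (G u, u)` may have infinite integral, so that both sides are the
-- junk value `0`.
lemma integral_integral_condDistrib_id_of_nonneg (hG : Measurable G) {F : β × Ω → ℝ}
    (hF : Measurable F) (hF₀ : 0 ≤ F)
    (hFi : ∀ c, Integrable (fun u => F (c, u)) (condDistrib id G P c)) :
    ∫ c, ∫ u, F (c, u) ∂condDistrib id G P c ∂P.map G = ∫ u, F (G u, u) ∂P := by
  have hF' : Measurable fun x => ENNReal.ofReal (F x) := hF.ennreal_ofReal
  calc ∫ c, ∫ u, F (c, u) ∂condDistrib id G P c ∂P.map G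
      = ∫ c, (∫⁻ u, ENNReal.ofReal (F (c, u)) ∂condDistrib id G P c).toReal ∂P.map G :=
        integral_congr_ae <| ae_of_all _ fun c =>
          integral_eq_lintegral_of_nonneg_ae (ae_of_all _ fun _ => hF₀ _) (hFi c).1
    _ = (∫⁻ c, ∫⁻ u, ENNReal.ofReal (F (c, u)) ∂condDistrib id G P c ∂P.map G).toReal :=
        integral_toReal hF'.lintegral_kernel_prod_right'.aemeasurable
          (ae_of_all _ fun c => (hFi c).lintegral_lt_top)
    _ = ∫ u, F (G u, u) ∂P := by
        rw [lintegral_lintegral_condDistrib_id hG hF']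
        exact (integral_eq_lintegral_of_nonneg_ae (f := fun u => F (G u, u))
          (ae_of_all _ fun _ => hF₀ _)
          (hF.comp (hG.prodMk measurable_id)).aestronglyMeasurable).symm

lemma ae_ae_condDistrib_id (hG : Measurable G) {p : Ω → Prop} (h : ∀ᵐ u ∂P, p u) :
    ∀ᵐ c ∂P.map G, ∀ᵐ u ∂condDistrib id G P c, p u := by
  refine Measure.ae_ae_of_ae_compProd (p := fun x => p x.2) ?_
  rw [compProd_map_condDistrib aemeasurable_id]
  refine ae_of_ae_map measurable_snd.aemeasurable ?_
  change ∀ᵐ u ∂(P.map fun u => (G u, id u)).snd, p u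
  rwa [Measure.snd_map_prodMk hG, Measure.map_id]

end CondDistribId

section AveragedEncoder

variable {ι V Ω β : Type*} [MeasurableSpace Ω] [MeasurableSpace β]
  {Q : ι → V → Ω → ℝ}

noncomputable def averagedEncoder (κ : Kernel β Ω) (Q : ι → V → Ω → ℝ) (m : ι) (v : V)
    (c : β) : ℝ :=
  ∫ u, Q m v u ∂κ c

lemma integrable_of_sum_eq_one [Fintype ι] (hQ₀ : ∀ m v u, 0 ≤ Q m v u)
    (hQ₁ : ∀ v u, ∑ m, Q m v u = 1) (hQ : ∀ m v, Measurable (Q m v)) (μ : Measure Ω)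
    [IsFiniteMeasure μ] (m : ι) (v : V) :
    Integrable (Q m v) μ := by
  refine .of_bound (hQ m v).aestronglyMeasurable 1 (ae_of_all _ fun u => ?_)
  rw [Real.norm_of_nonneg (hQ₀ m v u), ← hQ₁ v u]
  exact Finset.single_le_sum (fun i _ => hQ₀ i v u) (Finset.mem_univ m)

lemma averagedEncoder_nonneg (hQ₀ : ∀ m v u, 0 ≤ Q m v u) (κ : Kernel β Ω) (m : ι) (v : V)
    (c : β) : 0 ≤ averagedEncoder κ Q m v c :=
  integral_nonneg (hQ₀ m v)

lemma integral_sum_smul_eq_sum_averagedEncoder_smul [Fintype ι] {E : Type*}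
    [NormedAddCommGroup E] [NormedSpace ℝ E] [CompleteSpace E] {κ : Kernel β Ω}
    (hQ : ∀ c m v, Integrable (Q m v) (κ c)) (v : V) (c : β) (x : ι → E) :
    ∫ u, ∑ m, Q m v u • x m ∂κ c = ∑ m, averagedEncoder κ Q m v c • x m := by
  rw [integral_finsetSum _ fun m _ => (hQ c m v).smul_const (x m)]
  exact Finset.sum_congr rfl fun m _ => integral_smul_const _ _

lemma sum_averagedEncoder [Fintype ι] {κ : Kernel β Ω} [IsMarkovKernel κ]
    (hQ : ∀ c m v, Integrable (Q m v) (κ c)) (hQ₁ : ∀ v u, ∑ m, Q m v u = 1) (v : V) (c : β) :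
    ∑ m, averagedEncoder κ Q m v c = 1 := by
  simpa [hQ₁] using (integral_sum_smul_eq_sum_averagedEncoder_smul hQ v c fun _ => (1 : ℝ)).symm

lemma ae_averagedEncoder_le_exp_mul [Norm V] {κ : Kernel β Ω} {μ : Measure β} {ε : ℝ}
    (hQ : ∀ c m v, Integrable (Q m v) (κ c))
    (hLDP : ∀ᵐ c ∂μ, ∀ᵐ u ∂κ c, ∀ (m : ι) (v v' : V),
      ‖v‖ = 1 → ‖v'‖ = 1 → Q m v u ≤ Real.exp ε * Q m v' u) :
    ∀ᵐ c ∂μ, ∀ (m : ι) (v v' : V), ‖v‖ = 1 → ‖v'‖ = 1 →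
      averagedEncoder κ Q m v c ≤ Real.exp ε * averagedEncoder κ Q m v' c := by
  filter_upwards [hLDP] with c hc m v v' hv hv'
  rw [averagedEncoder, averagedEncoder, ← integral_const_mul]
  exact integral_mono_ae (hQ c m v) ((hQ c m v').const_mul _)
    (hc.mono fun u hu => hu m v v' hv hv')

end AveragedEncoder

theorem codebook_with_selector_suffices_general (d t M : ℕ)
    (ε : ℝ)
    (P : Measure (Fin t → ℝ)) [IsProbabilityMeasure P]
    (Q : Fin M → EuclideanSpace ℝ (Fin d) → (Fin t → ℝ) → ℝ)
    (hQnonneg : ∀ m v u, 0 ≤ Q m v u)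
    (hQsum : ∀ v u, ∑ m : Fin M, Q m v u = 1)
    (hQmeas : ∀ m v, Measurable fun u => Q m v u)
    (hLDP : ∀ᵐ u ∂P, ∀ (m : Fin M) (v v' : EuclideanSpace ℝ (Fin d)),
      ‖v‖ = 1 → ‖v'‖ = 1 → Q m v u ≤ Real.exp ε * Q m v' u)
    (g : Fin M → (Fin t → ℝ) → EuclideanSpace ℝ (Fin d))
    (hgmeas : ∀ m, Measurable (g m))
    (hunbiased : ∀ v : EuclideanSpace ℝ (Fin d), ‖v‖ = 1 →
      ∫ u, ∑ m : Fin M, Q m v u • g m u ∂P = v) :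
    ∃ (Pc : Measure (Fin M → EuclideanSpace ℝ (Fin d)))
      (_ : IsProbabilityMeasure Pc)
      (Q₀ : Fin M → EuclideanSpace ℝ (Fin d) → (Fin M → EuclideanSpace ℝ (Fin d)) → ℝ),
      (∀ m v c, 0 ≤ Q₀ m v c) ∧
      (∀ v c, ∑ m : Fin M, Q₀ m v c = 1) ∧
      (∀ᵐ c ∂Pc, ∀ (m : Fin M) (v v' : EuclideanSpace ℝ (Fin d)),
        ‖v‖ = 1 → ‖v'‖ = 1 → Q₀ m v c ≤ Real.exp ε * Q₀ m v' c) ∧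
      (∀ v : EuclideanSpace ℝ (Fin d), ‖v‖ = 1 →
        ∫ c, ∑ m : Fin M, Q₀ m v c • c m ∂Pc = v) ∧
      (∀ v : EuclideanSpace ℝ (Fin d), ‖v‖ = 1 →
        ∫ u, ∑ m : Fin M, Q m v u * ‖g m u - v‖ ^ 2 ∂P =
          ∫ c, ∑ m : Fin M, Q₀ m v c * ‖c m - v‖ ^ 2 ∂Pc) := by
  set G : (Fin t → ℝ) → Fin M → EuclideanSpace ℝ (Fin d) := fun u m => g m u
  have hG : Measurable G := measurable_pi_lambda _ hgmeas
  set κ := condDistrib id G P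
  have hQint c m v : Integrable (Q m v) (κ c) :=
    integrable_of_sum_eq_one hQnonneg hQsum hQmeas _ m v
  refine ⟨P.map G, Measure.isProbabilityMeasure_map hG.aemeasurable, averagedEncoder κ Q,
    averagedEncoder_nonneg hQnonneg κ, sum_averagedEncoder hQint hQsum,
    ae_averagedEncoder_le_exp_mul hQint (ae_ae_condDistrib_id hG hLDP), fun v hv => ?_,
    fun v hv => ?_⟩
  · have hint : Integrable (fun u => ∑ m, Q m v u • g m u) P := .of_integral_ne_zero <| by
      rw [hunbiased v hv, ← norm_ne_zero_iff, hv]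
      exact one_ne_zero
    calc ∫ c, ∑ m, averagedEncoder κ Q m v c • c m ∂P.map G
        = ∫ c, ∫ u, ∑ m, Q m v u • c m ∂κ c ∂P.map G := by
          simp only [integral_sum_smul_eq_sum_averagedEncoder_smul hQint]
      _ = ∫ u, ∑ m, Q m v u • g m u ∂P :=
        integral_integral_condDistrib_id hG (F := fun x => ∑ m, Q m v x.2 • x.1 m)
          (by fun_prop : Measurable _).stronglyMeasurable hint
      _ = v := hunbiased v hv
  · calc ∫ u, ∑ m, Q m v u * ‖g m u - v‖ ^ 2 ∂P
        = ∫ c, ∫ u, ∑ m, Q m v u * ‖c m - v‖ ^ 2 ∂κ c ∂P.map G :=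
        (integral_integral_condDistrib_id_of_nonneg hG
          (F := fun x => ∑ m, Q m v x.2 * ‖x.1 m - v‖ ^ (2 : ℕ)) (by fun_prop)
          (fun x => Finset.sum_nonneg fun m _ => mul_nonneg (hQnonneg m v x.2) (sq_nonneg _))
          fun c => integrable_finsetSum _ fun m _ => (hQint c m v).mul_const (‖c m - v‖ ^ 2)).symm
      _ = ∫ c, ∑ m, averagedEncoder κ Q m v c * ‖c m - v‖ ^ 2 ∂P.map G := by
        simp only [← smul_eq_mul, integral_sum_smul_eq_sum_averagedEncoder_smul hQint]

/-- Sufficiency of random codebooks with simple selecting decoders (Lemma 2): for any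
shared randomness `U ∈ ℝ^t` with law `P`, any `ε`-LDP random encoder
`f : S^{d−1} × ℝ^t → [M]` (given by transition probabilities `Q`), and any deterministic
decoder `g : [M] × ℝ^t → ℝ^d` such that the composition is unbiased, there exist a random
codebook `Ũ^M ∈ (ℝ^d)^M` (a probability law `Pc` on `(ℝ^d)^M`) and a random encoder `Q₀`
satisfying `ε`-LDP such that the scheme with the simple selecting decoder
`g⁺(m, Ũ^M) = Ũ_m` is unbiased and has exactly the same per-input error. -/
theorem codebook_with_selector_suffices (d t M : ℕ) (hd : 1 ≤ d) (ht : 1 ≤ t) (hM : 2 ≤ M)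
    (ε : ℝ) (hε : 0 < ε)
    (P : Measure (Fin t → ℝ)) [IsProbabilityMeasure P]
    (Q : Fin M → EuclideanSpace ℝ (Fin d) → (Fin t → ℝ) → ℝ)
    (hQnonneg : ∀ m v u, 0 ≤ Q m v u)
    (hQsum : ∀ v u, ∑ m : Fin M, Q m v u = 1)
    (hQmeas : ∀ m v, Measurable fun u => Q m v u)
    (hLDP : ∀ᵐ u ∂P, ∀ (m : Fin M) (v v' : EuclideanSpace ℝ (Fin d)),
      ‖v‖ = 1 → ‖v'‖ = 1 → Q m v u ≤ Real.exp ε * Q m v' u)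
    (g : Fin M → (Fin t → ℝ) → EuclideanSpace ℝ (Fin d))
    (hgmeas : ∀ m, Measurable (g m))
    (hunbiased : ∀ v : EuclideanSpace ℝ (Fin d), ‖v‖ = 1 →
      ∫ u, ∑ m : Fin M, Q m v u • g m u ∂P = v) :
    ∃ (Pc : Measure (Fin M → EuclideanSpace ℝ (Fin d)))
      (_ : IsProbabilityMeasure Pc)
      (Q₀ : Fin M → EuclideanSpace ℝ (Fin d) → (Fin M → EuclideanSpace ℝ (Fin d)) → ℝ),
      (∀ m v c, 0 ≤ Q₀ m v c) ∧
      (∀ v c, ∑ m : Fin M, Q₀ m v c = 1) ∧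
      (∀ᵐ c ∂Pc, ∀ (m : Fin M) (v v' : EuclideanSpace ℝ (Fin d)),
        ‖v‖ = 1 → ‖v'‖ = 1 → Q₀ m v c ≤ Real.exp ε * Q₀ m v' c) ∧
      (∀ v : EuclideanSpace ℝ (Fin d), ‖v‖ = 1 →
        ∫ c, ∑ m : Fin M, Q₀ m v c • c m ∂Pc = v) ∧
      (∀ v : EuclideanSpace ℝ (Fin d), ‖v‖ = 1 →
        ∫ u, ∑ m : Fin M, Q m v u * ‖g m u - v‖ ^ 2 ∂P =
          ∫ c, ∑ m : Fin M, Q₀ m v c * ‖c m - v‖ ^ 2 ∂Pc) :=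
  codebook_with_selector_suffices_general d t M ε P Q hQnonneg hQsum hQmeas hLDP g hgmeas hunbiased
end

section
/- Global ratio bound for equivariant encoders on the rotating simplex codebook (key step of Theorem 1): Fix ε > 0, 2 ≤ M ≤ d and r > 0. Let Q(m | v, A) ∈ [0,1] (m ∈ [M], v ∈ S^{d−1}, A a d×d orthogonal matrix) be transition probabilities for the codebook (r A s_1, …, r A s_M) satisfying: (i) ε-LDP: Q(m | v, A) ≤ e^ε Q(m | v′, A) for all m, v, v′, A; (ii) rotation equivariance: Q(m | R v, R A) = Q(m | v, A) for every orthogonal R; (iii) relabeling covariance: viewing the encoder as a function of the labeled codeword tuple, for every permutation σ of [M] the probability assigned to a given codeword is unchanged when the codewords are relabeled by σ. Then Q(m_1 | v_1, A_1) ≤ e^ε Q(m_2 | v_2, A_2) for all m_1, m_2 ∈ [M], all v_1, v_2 ∈ S^{d−1}, and all orthogonal A_1, A_2; i.e., the supremum of Q over all (m, v, A) is at most e^ε times its infimum. -/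
/-!
Rotation equivariance carries any realization `A₂` of the codebook to any other `A₁`, moving the
input by an orthogonal map, so it stays on the sphere. A permutation matrix `P_σ` maps the simplex
codebook to itself with its labels permuted by `σ`, so relabeling covariance moves any message
`m₂` to any `m₁`. Hence `Q(m₂ | v₂, A₂) = Q(m₁ | w, A₁)` for some unit `w`, and `ε`-LDP on the
single codebook `A₁` compares this with `Q(m₁ | v₁, A₁)`.
-/

open Matrix
open scoped BigOperators

noncomputable section

/-- The simplex vectors `s_1, …, s_M ∈ ℝ^d`. -/
def simplexVec (d M : ℕ) (i : Fin M) : EuclideanSpace ℝ (Fin d) :=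
  (EuclideanSpace.equiv (Fin d) ℝ).symm fun j =>
    if (j : ℕ) = (i : ℕ) then ((M : ℝ) - 1) / Real.sqrt ((M : ℝ) * ((M : ℝ) - 1))
    else if (j : ℕ) < M then -(1 / Real.sqrt ((M : ℝ) * ((M : ℝ) - 1)))
    else 0

/-- A matrix acting on Euclidean space. -/
def act {d : ℕ} (A : Matrix (Fin d) (Fin d) ℝ) (v : EuclideanSpace ℝ (Fin d)) :
    EuclideanSpace ℝ (Fin d) :=
  (EuclideanSpace.equiv (Fin d) ℝ).symm (A.mulVec (EuclideanSpace.equiv (Fin d) ℝ v))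

/-- The simplex codebook of radius `r` rotated by the matrix `A`: `(r A s_1, …, r A s_M)`. -/
def simplexCodebook (d M : ℕ) (r : ℝ) (A : Matrix (Fin d) (Fin d) ℝ) :
    Fin M → EuclideanSpace ℝ (Fin d) :=
  fun m => r • act A (simplexVec d M m)

section Orthogonal

variable {d : ℕ}

lemma act_mul (A B : Matrix (Fin d) (Fin d) ℝ) (v : EuclideanSpace ℝ (Fin d)) :
    act (A * B) v = act A (act B v) := by
  rw [act, act, act, ContinuousLinearEquiv.apply_symm_apply, Matrix.mulVec_mulVec]

lemma act_smul (A : Matrix (Fin d) (Fin d) ℝ) (c : ℝ) (v : EuclideanSpace ℝ (Fin d)) :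
    act A (c • v) = c • act A v := by
  simp [act, Matrix.mulVec_smul]

lemma norm_act {A : Matrix (Fin d) (Fin d) ℝ} (hA : A ∈ Matrix.orthogonalGroup (Fin d) ℝ)
    (v : EuclideanSpace ℝ (Fin d)) : ‖act A v‖ = ‖v‖ :=
  ContinuousLinearMap.norm_map_of_mem_unitary
    (Unitary.map_mem (Matrix.toEuclideanCLM (n := Fin d) (𝕜 := ℝ)) hA) v

lemma act_permMatrix_apply (τ : Equiv.Perm (Fin d)) (v : EuclideanSpace ℝ (Fin d)) (k : Fin d) :
    act (τ.permMatrix ℝ) v k = v (τ k) := by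
  simp [act, permMatrix_mulVec]

lemma permMatrix_mem_orthogonalGroup {n : Type*} [Fintype n] [DecidableEq n] (τ : Equiv.Perm n) :
    τ.permMatrix ℝ ∈ Matrix.orthogonalGroup n ℝ := by
  rw [Matrix.mem_orthogonalGroup_iff, transpose_permMatrix, ← permMatrix_mul, inv_mul_cancel,
    permMatrix_one]

end Orthogonal

section Simplex

variable {d M : ℕ}

lemma simplexVec_apply_castLE (hMd : M ≤ d) (i j : Fin M) :
    simplexVec d M j (Fin.castLE hMd i) =
      if i = j then ((M : ℝ) - 1) / Real.sqrt ((M : ℝ) * ((M : ℝ) - 1))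
      else -(1 / Real.sqrt ((M : ℝ) * ((M : ℝ) - 1))) := by
  simp [simplexVec, Fin.val_inj]

lemma simplexVec_apply_of_le {k : Fin d} (hk : M ≤ k) (j : Fin M) : simplexVec d M j k = 0 := by
  have hkj : (k : ℕ) ≠ j := by omega
  simp [simplexVec, hkj, not_lt.mpr hk]

lemma act_permMatrix_simplexVec (hMd : M ≤ d) (σ : Equiv.Perm (Fin M)) (j : Fin M) :
    act ((σ.viaFintypeEmbedding (Fin.castLEEmb hMd)).permMatrix ℝ) (simplexVec d M j) =
      simplexVec d M (σ.symm j) := by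
  ext k
  rw [act_permMatrix_apply]
  by_cases hk : (k : ℕ) < M
  · obtain ⟨i, rfl⟩ : ∃ i : Fin M, Fin.castLEEmb hMd i = k := ⟨⟨k, hk⟩, rfl⟩
    rw [Equiv.Perm.viaFintypeEmbedding_apply_image, Fin.castLEEmb_apply, Fin.castLEEmb_apply,
      simplexVec_apply_castLE, simplexVec_apply_castLE]
    simp only [← σ.eq_symm_apply]
  · have hk' : k ∉ Set.range (Fin.castLEEmb hMd) := by
      rintro ⟨i, rfl⟩
      exact hk i.isLt
    rw [Equiv.Perm.viaFintypeEmbedding_apply_notMem_range _ _ hk', simplexVec_apply_of_le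
      (not_lt.mp hk), simplexVec_apply_of_le (not_lt.mp hk)]

lemma act_simplexCodebook (r : ℝ) (R A : Matrix (Fin d) (Fin d) ℝ) :
    (fun j => act R (simplexCodebook d M r A j)) = simplexCodebook d M r (R * A) := by
  funext j
  simp only [simplexCodebook, act_smul, act_mul]

lemma simplexCodebook_mul_permMatrix (hMd : M ≤ d) (r : ℝ) (A : Matrix (Fin d) (Fin d) ℝ)
    (σ : Equiv.Perm (Fin M)) :
    simplexCodebook d M r (A * (σ.viaFintypeEmbedding (Fin.castLEEmb hMd)).permMatrix ℝ) =
      fun j => simplexCodebook d M r A (σ.symm j) := by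
  funext j
  simp only [simplexCodebook, act_mul, act_permMatrix_simplexVec]

end Simplex

section Encoder

variable {d M : ℕ} {r : ℝ}
  {Q : Fin M → EuclideanSpace ℝ (Fin d) → (Fin M → EuclideanSpace ℝ (Fin d)) → ℝ}

def RotationEquivariant (d M : ℕ) (r : ℝ)
    (Q : Fin M → EuclideanSpace ℝ (Fin d) → (Fin M → EuclideanSpace ℝ (Fin d)) → ℝ) : Prop :=
  ∀ R ∈ Matrix.orthogonalGroup (Fin d) ℝ, ∀ A ∈ Matrix.orthogonalGroup (Fin d) ℝ,
    ∀ (m : Fin M) (v : EuclideanSpace ℝ (Fin d)),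
      Q m (act R v) (fun j => act R (simplexCodebook d M r A j)) = Q m v (simplexCodebook d M r A)

def RelabelingCovariant (d M : ℕ) (r : ℝ)
    (Q : Fin M → EuclideanSpace ℝ (Fin d) → (Fin M → EuclideanSpace ℝ (Fin d)) → ℝ) : Prop :=
  ∀ (σ : Equiv.Perm (Fin M)), ∀ A ∈ Matrix.orthogonalGroup (Fin d) ℝ,
    ∀ (m : Fin M) (v : EuclideanSpace ℝ (Fin d)),
      Q (σ m) v (fun j => simplexCodebook d M r A (σ.symm j)) = Q m v (simplexCodebook d M r A)

lemma RotationEquivariant.apply_act_mul_star (hQ : RotationEquivariant d M r Q)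
    {A A' : Matrix (Fin d) (Fin d) ℝ} (hA : A ∈ Matrix.orthogonalGroup (Fin d) ℝ)
    (hA' : A' ∈ Matrix.orthogonalGroup (Fin d) ℝ) (m : Fin M) (v : EuclideanSpace ℝ (Fin d)) :
    Q m (act (A' * star A) v) (simplexCodebook d M r A') = Q m v (simplexCodebook d M r A) := by
  have h := hQ _ (mul_mem hA' (Unitary.star_mem hA)) A hA m v
  rwa [act_simplexCodebook, mul_assoc, Unitary.star_mul_self_of_mem hA, mul_one] at h

lemma RelabelingCovariant.apply_mul_permMatrix (hQ : RelabelingCovariant d M r Q) (hMd : M ≤ d)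
    (σ : Equiv.Perm (Fin M)) {A : Matrix (Fin d) (Fin d) ℝ}
    (hA : A ∈ Matrix.orthogonalGroup (Fin d) ℝ) (m : Fin M) (v : EuclideanSpace ℝ (Fin d)) :
    Q (σ m) v (simplexCodebook d M r (A * (σ.viaFintypeEmbedding (Fin.castLEEmb hMd)).permMatrix ℝ))
      = Q m v (simplexCodebook d M r A) := by
  rw [simplexCodebook_mul_permMatrix]
  exact hQ σ A hA m v

lemma exists_norm_eq_apply_eq (hrot : RotationEquivariant d M r Q)
    (hrel : RelabelingCovariant d M r Q) (hMd : M ≤ d) {A₁ A₂ : Matrix (Fin d) (Fin d) ℝ}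
    (hA₁ : A₁ ∈ Matrix.orthogonalGroup (Fin d) ℝ) (hA₂ : A₂ ∈ Matrix.orthogonalGroup (Fin d) ℝ)
    (m₁ m₂ : Fin M) (v : EuclideanSpace ℝ (Fin d)) :
    ∃ w : EuclideanSpace ℝ (Fin d), ‖w‖ = ‖v‖ ∧
      Q m₁ w (simplexCodebook d M r A₁) = Q m₂ v (simplexCodebook d M r A₂) := by
  set σ := Equiv.swap m₁ m₂
  set A := A₂ * (σ.viaFintypeEmbedding (Fin.castLEEmb hMd)).permMatrix ℝ
  have hA : A ∈ Matrix.orthogonalGroup (Fin d) ℝ :=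
    mul_mem hA₂ (permMatrix_mem_orthogonalGroup _)
  refine ⟨act (A₁ * star A) v, norm_act (mul_mem hA₁ (Unitary.star_mem hA)) v, ?_⟩
  calc Q m₁ (act (A₁ * star A) v) (simplexCodebook d M r A₁)
      = Q (σ m₂) v (simplexCodebook d M r A) := by
        rw [hrot.apply_act_mul_star hA hA₁, Equiv.swap_apply_right]
    _ = Q m₂ v (simplexCodebook d M r A₂) := hrel.apply_mul_permMatrix hMd σ hA₂ m₂ v

end Encoder

theorem global_ratio_bound_general (d M : ℕ) (hMd : M ≤ d) (ε : ℝ)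
    (r : ℝ)
    (Q : Fin M → EuclideanSpace ℝ (Fin d) → (Fin M → EuclideanSpace ℝ (Fin d)) → ℝ)
    -- (i) ε-LDP on every codebook realization
    (hLDP : ∀ (A : Matrix (Fin d) (Fin d) ℝ), A ∈ Matrix.orthogonalGroup (Fin d) ℝ →
      ∀ (m : Fin M) (v v' : EuclideanSpace ℝ (Fin d)), ‖v‖ = 1 → ‖v'‖ = 1 →
      Q m v (simplexCodebook d M r A) ≤ Real.exp ε * Q m v' (simplexCodebook d M r A))
    -- (ii) rotation equivariance
    (hequiv : ∀ (R : Matrix (Fin d) (Fin d) ℝ), R ∈ Matrix.orthogonalGroup (Fin d) ℝ →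
      ∀ (A : Matrix (Fin d) (Fin d) ℝ), A ∈ Matrix.orthogonalGroup (Fin d) ℝ →
      ∀ (m : Fin M) (v : EuclideanSpace ℝ (Fin d)),
      Q m (act R v) (fun j => act R (simplexCodebook d M r A j)) =
        Q m v (simplexCodebook d M r A))
    -- (iii) relabeling covariance
    (hrelabel : ∀ (σ : Equiv.Perm (Fin M)) (A : Matrix (Fin d) (Fin d) ℝ),
      A ∈ Matrix.orthogonalGroup (Fin d) ℝ →
      ∀ (m : Fin M) (v : EuclideanSpace ℝ (Fin d)),
      Q (σ m) v (fun j => simplexCodebook d M r A (σ.symm j)) =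
        Q m v (simplexCodebook d M r A)) :
    ∀ (m₁ m₂ : Fin M) (v₁ v₂ : EuclideanSpace ℝ (Fin d)), ‖v₁‖ = 1 → ‖v₂‖ = 1 →
      ∀ (A₁ A₂ : Matrix (Fin d) (Fin d) ℝ), A₁ ∈ Matrix.orthogonalGroup (Fin d) ℝ →
      A₂ ∈ Matrix.orthogonalGroup (Fin d) ℝ →
      Q m₁ v₁ (simplexCodebook d M r A₁) ≤
        Real.exp ε * Q m₂ v₂ (simplexCodebook d M r A₂) := by
  intro m₁ m₂ v₁ v₂ hv₁ hv₂ A₁ A₂ hA₁ hA₂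
  obtain ⟨w, hw, hQw⟩ := exists_norm_eq_apply_eq hequiv hrelabel hMd hA₁ hA₂ m₁ m₂ v₂
  rw [← hQw]
  exact hLDP A₁ hA₁ m₁ v₁ w hv₁ (hw.trans hv₂)

/-- Global ratio bound for equivariant encoders on the rotating simplex codebook (key step of
Theorem 1): if the transition probabilities `Q(m | v, ·)` on codebooks `(r A s_1, …, r A s_M)`
satisfy (i) `ε`-LDP, (ii) rotation equivariance and (iii) relabeling covariance, then
`Q(m₁ | v₁, A₁) ≤ e^ε · Q(m₂ | v₂, A₂)` for all messages, unit inputs and orthogonal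
matrices; i.e. the supremum of `Q` is at most `e^ε` times its infimum. -/
theorem global_ratio_bound (d M : ℕ) (hM : 2 ≤ M) (hMd : M ≤ d) (ε : ℝ) (hε : 0 < ε)
    (r : ℝ) (hr : 0 < r)
    (Q : Fin M → EuclideanSpace ℝ (Fin d) → (Fin M → EuclideanSpace ℝ (Fin d)) → ℝ)
    (hQnonneg : ∀ m v c, 0 ≤ Q m v c)
    (hQsum : ∀ (A : Matrix (Fin d) (Fin d) ℝ), A ∈ Matrix.orthogonalGroup (Fin d) ℝ →
      ∀ v : EuclideanSpace ℝ (Fin d),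
      ∑ m : Fin M, Q m v (simplexCodebook d M r A) = 1)
    -- (i) ε-LDP on every codebook realization
    (hLDP : ∀ (A : Matrix (Fin d) (Fin d) ℝ), A ∈ Matrix.orthogonalGroup (Fin d) ℝ →
      ∀ (m : Fin M) (v v' : EuclideanSpace ℝ (Fin d)), ‖v‖ = 1 → ‖v'‖ = 1 →
      Q m v (simplexCodebook d M r A) ≤ Real.exp ε * Q m v' (simplexCodebook d M r A))
    -- (ii) rotation equivariance
    (hequiv : ∀ (R : Matrix (Fin d) (Fin d) ℝ), R ∈ Matrix.orthogonalGroup (Fin d) ℝ →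
      ∀ (A : Matrix (Fin d) (Fin d) ℝ), A ∈ Matrix.orthogonalGroup (Fin d) ℝ →
      ∀ (m : Fin M) (v : EuclideanSpace ℝ (Fin d)),
      Q m (act R v) (fun j => act R (simplexCodebook d M r A j)) =
        Q m v (simplexCodebook d M r A))
    -- (iii) relabeling covariance
    (hrelabel : ∀ (σ : Equiv.Perm (Fin M)) (A : Matrix (Fin d) (Fin d) ℝ),
      A ∈ Matrix.orthogonalGroup (Fin d) ℝ →
      ∀ (m : Fin M) (v : EuclideanSpace ℝ (Fin d)),
      Q (σ m) v (fun j => simplexCodebook d M r A (σ.symm j)) =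
        Q m v (simplexCodebook d M r A)) :
    ∀ (m₁ m₂ : Fin M) (v₁ v₂ : EuclideanSpace ℝ (Fin d)), ‖v₁‖ = 1 → ‖v₂‖ = 1 →
      ∀ (A₁ A₂ : Matrix (Fin d) (Fin d) ℝ), A₁ ∈ Matrix.orthogonalGroup (Fin d) ℝ →
      A₂ ∈ Matrix.orthogonalGroup (Fin d) ℝ →
      Q m₁ v₁ (simplexCodebook d M r A₁) ≤
        Real.exp ε * Q m₂ v₂ (simplexCodebook d M r A₂) :=
  global_ratio_bound_general d M hMd ε r Q hLDP hequiv hrelabel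
end
end
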